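/- arXiv:1001.0797 — 3 statements merged into one kernel-verified Lean document; each statement's English description precedes it below -/
import Mathlib

section
/- If G is a γ_t-critical graph and v is a vertex of G that is not a support vertex, then every total dominating set of G − v of minimum cardinality γ_t(G − v) contains no neighbor of v. -/
open scoped Classical

namespace SimpleGraph

variable {V : Type*}

/-- A set `S` is a total dominating set if every vertex is adjacent to a vertex of `S`. -/
def IsTotalDomSet (G : SimpleGraph V) (S : Set V) : Prop :=
  ∀ v : V, ∃ u ∈ S, G.Adj v u

/-- The total domination number: minimum cardinality of a total dominating set. -/
noncomputable def totalDomNum (G : SimpleGraph V) [Fintype V] : ℕ :=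
  sInf {n : ℕ | ∃ S : Finset V, G.IsTotalDomSet ↑S ∧ S.card = n}

/-- The graph obtained by deleting the vertex `v`. -/
def deleteVert (G : SimpleGraph V) (v : V) : SimpleGraph {u : V // u ≠ v} :=
  G.induce {u : V | u ≠ v}

/-- A support vertex is a vertex adjacent to a leaf (a vertex of degree one). -/
noncomputable def IsSupportVertex (G : SimpleGraph V) [Fintype V] (v : V) : Prop :=
  ∃ u : V, G.Adj v u ∧ G.degree u = 1

/-- `G` is total domination vertex critical: it has no isolated vertex and deleting any
vertex that is not a support vertex decreases the total domination number. -/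
noncomputable def IsTotalDomCritical (G : SimpleGraph V) [Fintype V] : Prop :=
  (∀ v : V, 0 < G.degree v) ∧
  ∀ v : V, ¬ G.IsSupportVertex v →
    (G.deleteVert v).totalDomNum < G.totalDomNum

theorem totalDomNum_le_card [Fintype V] {G : SimpleGraph V} {T : Finset V}
    (hT : G.IsTotalDomSet ↑T) : G.totalDomNum ≤ T.card :=
  Nat.sInf_le ⟨T, hT, rfl⟩

theorem IsTotalDomSet.image_val_of_adj {G : SimpleGraph V} {v : V} {S : Set {u : V // u ≠ v}}
    (hS : (G.deleteVert v).IsTotalDomSet S) {u : {u : V // u ≠ v}} (hu : u ∈ S)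
    (hadj : G.Adj v u) : G.IsTotalDomSet (Subtype.val '' S) := by
  intro w
  by_cases hw : w = v
  · exact ⟨u, Set.mem_image_of_mem _ hu, hw ▸ hadj⟩
  · obtain ⟨x, hx, hwx⟩ := hS ⟨w, hw⟩
    exact ⟨x, Set.mem_image_of_mem _ hx, hwx⟩

/-- in a `γₜ`-critical graph, any minimum total dominating set of `G - v`
(for `v` not a support vertex) contains no neighbor of `v`. -/
theorem stmt4 {V : Type*} [Fintype V] (G : SimpleGraph V)
    (hcrit : G.IsTotalDomCritical) (v : V) (hv : ¬ G.IsSupportVertex v)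
    (S : Finset {u : V // u ≠ v})
    (hS : (G.deleteVert v).IsTotalDomSet ↑S)
    (hcard : S.card = (G.deleteVert v).totalDomNum) :
    ∀ u ∈ S, ¬ G.Adj v u.1 := by
  intro u hu hadj
  have hdom : G.IsTotalDomSet ↑(S.image Subtype.val) := by
    rw [Finset.coe_image]
    exact hS.image_val_of_adj hu hadj
  have hle : G.totalDomNum ≤ (G.deleteVert v).totalDomNum :=
    calc G.totalDomNum ≤ (S.image Subtype.val).card := totalDomNum_le_card hdom
      _ = S.card := Finset.card_image_of_injective _ Subtype.val_injective
      _ = (G.deleteVert v).totalDomNum := hcard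
  exact (hcrit.2 v hv).not_ge hle

end SimpleGraph
end

section
/- Let G be a γ_t-critical graph of order n with γ_t(G) = n − Δ(G) and δ(G) ≥ 2, let v be a vertex of maximum degree Δ(G), and let S = V(G) − N[v]. If the induced subgraph G[S] contains a connected component isomorphic to the path P_3, then G[S] itself is a single path P_3 = u_1 u_2 u_3; moreover N(u_2) ∩ N(v) = ∅ and N(v) is the disjoint union of the nonempty sets N(u_1) − {u_2} and N(u_3) − {u_2}. -/
open scoped Classical

namespace SimpleGraph

variable {V : Type*}

section helpers
variable [Fintype V] (G : SimpleGraph V)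

lemma totalDomNum_le' {W : Finset V} (hW : G.IsTotalDomSet ↑W) : G.totalDomNum ≤ W.card :=
  Nat.sInf_le ⟨W, hW, rfl⟩

lemma not_TDS' {W : Finset V} (h : W.card < G.totalDomNum) : ¬ G.IsTotalDomSet ↑W :=
  fun hW => absurd (G.totalDomNum_le' hW) (by omega)

lemma crit_extract (hcrit : G.IsTotalDomCritical) (hδ : 2 ≤ G.minDegree) (x : V) :
    ∃ D : Finset V, D.card < G.totalDomNum ∧ (∀ d ∈ D, d ≠ x ∧ ¬ G.Adj x d) ∧
      ∀ y : V, y ≠ x → ∃ d ∈ D, G.Adj y d := by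
  have hdeg : ∀ y : V, 2 ≤ G.degree y := fun y => le_trans hδ (G.minDegree_le_degree y)
  have hns : ¬ G.IsSupportVertex x := by
    rintro ⟨u, _, hu1⟩
    have := hdeg u
    omega
  have hlt : (G.deleteVert x).totalDomNum < G.totalDomNum := hcrit.2 x hns
  have huniv : (G.deleteVert x).IsTotalDomSet ↑(Finset.univ : Finset {u : V // u ≠ x}) := by
    rintro ⟨y, hy⟩
    have h2 : 1 < (G.neighborFinset y).card := by
      rw [G.card_neighborFinset_eq_degree]; exact hdeg y
    obtain ⟨d, hd, hdx⟩ := Finset.exists_mem_ne h2 x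
    rw [G.mem_neighborFinset] at hd
    exact ⟨⟨d, hdx⟩, Finset.mem_coe.mpr (Finset.mem_univ _), hd⟩
  have hne : {n : ℕ | ∃ S : Finset {u : V // u ≠ x},
      (G.deleteVert x).IsTotalDomSet ↑S ∧ S.card = n}.Nonempty :=
    ⟨_, Finset.univ, huniv, rfl⟩
  obtain ⟨D₀, hD₀, hcard⟩ := Nat.sInf_mem hne
  have hcard' : D₀.card < G.totalDomNum := by rw [hcard]; exact hlt
  set D : Finset V := D₀.map ⟨Subtype.val, Subtype.val_injective⟩ with hDdef
  have hDcard : D.card < G.totalDomNum := by rwa [Finset.card_map]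
  have hDne : ∀ d ∈ D, d ≠ x := by
    intro d hd
    rw [hDdef, Finset.mem_map] at hd
    obtain ⟨⟨d', hd'⟩, _, rfl⟩ := hd
    exact hd'
  have hDdom : ∀ y : V, y ≠ x → ∃ d ∈ D, G.Adj y d := by
    intro y hy
    obtain ⟨⟨d, hdx⟩, hdm, hadj⟩ := hD₀ ⟨y, hy⟩
    refine ⟨d, ?_, hadj⟩
    rw [hDdef, Finset.mem_map]
    exact ⟨⟨d, hdx⟩, Finset.mem_coe.mp hdm, rfl⟩
  refine ⟨D, hDcard, fun d hd => ⟨hDne d hd, ?_⟩, hDdom⟩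
  by_contra hadj
  apply G.not_TDS' hDcard
  intro y
  by_cases hyx : y = x
  · exact ⟨d, Finset.mem_coe.mpr hd, by rw [hyx]; exact hadj⟩
  · obtain ⟨d', hd', ha⟩ := hDdom y hyx
    exact ⟨d', Finset.mem_coe.mpr hd', ha⟩

end helpers

set_option maxHeartbeats 1000000

/-- for a `γₜ`-critical graph `G` with `γₜ(G) = n - Δ(G)` and `δ(G) ≥ 2`,
and `v` of maximum degree, if `G[V - N[v]]` has a component isomorphic to `P₃`, then
`G[V - N[v]]` is a single path `u₁u₂u₃`, `N(u₂) ∩ N(v) = ∅`, and `N(v)` is the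
disjoint union of the nonempty sets `N(u₁) - {u₂}` and `N(u₃) - {u₂}`. -/
theorem stmt9 {V : Type*} [Fintype V] (G : SimpleGraph V)
    (hcrit : G.IsTotalDomCritical)
    (hγ : G.totalDomNum = Fintype.card V - G.maxDegree)
    (hδ : 2 ≤ G.minDegree)
    (v : V) (hv : G.degree v = G.maxDegree)
    (S : Set V) (hS : S = ({v} ∪ G.neighborSet v)ᶜ)
    (hP3 : ∃ c : (G.induce S).ConnectedComponent,
      Nonempty ((G.induce S).induce c.supp ≃g pathGraph 3)) :
    ∃ u₁ u₂ u₃ : V, u₁ ≠ u₂ ∧ u₂ ≠ u₃ ∧ u₁ ≠ u₃ ∧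
      S = {u₁, u₂, u₃} ∧
      G.Adj u₁ u₂ ∧ G.Adj u₂ u₃ ∧ ¬ G.Adj u₁ u₃ ∧
      G.neighborSet u₂ ∩ G.neighborSet v = ∅ ∧
      (G.neighborSet u₁ \ {u₂}).Nonempty ∧
      (G.neighborSet u₃ \ {u₂}).Nonempty ∧
      Disjoint (G.neighborSet u₁ \ {u₂}) (G.neighborSet u₃ \ {u₂}) ∧
      G.neighborSet v = (G.neighborSet u₁ \ {u₂}) ∪ (G.neighborSet u₃ \ {u₂}) := by
  classical
  obtain ⟨c, ⟨e⟩⟩ := hP3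
  -- extract the path vertices
  set w : Fin 3 → V := fun i => ((e.symm i).val : ↥S).val with hwdef
  have hwS : ∀ i, w i ∈ S := fun i => ((e.symm i).val).prop
  have hwsupp : ∀ i, (e.symm i).val ∈ c.supp := fun i => (e.symm i).prop
  have hadj_iff : ∀ i j, G.Adj (w i) (w j) ↔ (pathGraph 3).Adj i j := by
    intro i j
    rw [← e.symm.map_adj_iff]
    exact Iff.rfl
  have ha01 : G.Adj (w 0) (w 1) := by
    rw [hadj_iff, pathGraph_adj]; exact Or.inl rfl
  have ha12 : G.Adj (w 1) (w 2) := by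
    rw [hadj_iff, pathGraph_adj]; exact Or.inl rfl
  have hn02 : ¬ G.Adj (w 0) (w 2) := by
    rw [hadj_iff, pathGraph_adj]
    rintro (h | h) <;> exact absurd h (by decide)
  have hwinj : Function.Injective w := by
    intro i j h
    exact e.symm.injective (Subtype.ext (Subtype.ext h))
  have hsupp_cases : ∀ (x : V) (hx : x ∈ S), (⟨x, hx⟩ : ↥S) ∈ c.supp →
      x = w 0 ∨ x = w 1 ∨ x = w 2 := by
    intro x hx hmem
    set z : ↥c.supp := ⟨⟨x, hx⟩, hmem⟩ with hzdef
    have hz : e.symm (e z) = z := e.symm_apply_apply z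
    have hxw : w (e z) = x := congrArg (fun t => t.val.val) hz
    have h3 : ∀ i : Fin 3, i = 0 ∨ i = 1 ∨ i = 2 := by decide
    rcases h3 (e z) with h | h | h <;> rw [h] at hxw
    · exact Or.inl hxw.symm
    · exact Or.inr (Or.inl hxw.symm)
    · exact Or.inr (Or.inr hxw.symm)
  have hclo : ∀ (x : V), x ∈ S → ∀ i : Fin 3, G.Adj x (w i) →
      x = w 0 ∨ x = w 1 ∨ x = w 2 := by
    intro x hx i hadj
    apply hsupp_cases x hx
    have hadj' : (G.induce S).Adj ⟨x, hx⟩ (e.symm i).val := hadj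
    have hreach := ConnectedComponent.sound hadj'.reachable
    rw [ConnectedComponent.mem_supp_iff, hreach, ← ConnectedComponent.mem_supp_iff]
    exact hwsupp i
  -- basic membership facts
  have memS : ∀ x : V, x ∈ S ↔ x ≠ v ∧ ¬ G.Adj v x := by
    intro x
    rw [hS]
    simp only [Set.mem_compl_iff, Set.mem_union, Set.mem_singleton_iff, mem_neighborSet]
    tauto
  have hcases : ∀ y : V, y = v ∨ G.Adj v y ∨ y ∈ S := by
    intro y
    by_cases h1 : y = v
    · exact Or.inl h1
    by_cases h2 : G.Adj v y
    · exact Or.inr (Or.inl h2)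
    · exact Or.inr (Or.inr ((memS y).mpr ⟨h1, h2⟩))
  have hdeg2 : ∀ y : V, 2 ≤ G.degree y := fun y => le_trans hδ (G.minDegree_le_degree y)
  have hSnv : ∀ x ∈ S, ¬ G.Adj v x := fun x hx => ((memS x).mp hx).2
  have hSnv' : ∀ x ∈ S, ¬ G.Adj x v := fun x hx h => hSnv x hx h.symm
  have hSne : ∀ x ∈ S, x ≠ v := fun x hx => ((memS x).mp hx).1
  -- numerology
  set Sf : Finset V := S.toFinset with hSfdef
  have hmemSf : ∀ x : V, x ∈ Sf ↔ x ∈ S := fun x => Set.mem_toFinset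
  have hSfcompl : Sf = (insert v (G.neighborFinset v))ᶜ := by
    ext x
    simp only [hmemSf, memS, Finset.mem_compl, Finset.mem_insert, mem_neighborFinset]
    tauto
  have hvnmem : v ∉ G.neighborFinset v := by
    rw [mem_neighborFinset]; exact G.irrefl
  have hΔ1 : (insert v (G.neighborFinset v)).card = G.degree v + 1 := by
    rw [Finset.card_insert_of_notMem hvnmem, G.card_neighborFinset_eq_degree]
  have hΔn : G.degree v + 1 ≤ Fintype.card V := by
    rw [← hΔ1]; exact Finset.card_le_univ _
  have hSfcard : Sf.card = Fintype.card V - (G.degree v + 1) := by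
    rw [hSfcompl, Finset.card_compl, hΔ1]
  have hγt : G.totalDomNum = Sf.card + 1 := by
    rw [hγ, ← hv] at *
    omega
  -- the dominating-from-S fact
  have hdom : ∀ y : V, y ≠ v → ∃ d, d ∈ S ∧ G.Adj y d := by
    obtain ⟨D, hDcard, hDprop, hDdom⟩ := G.crit_extract hcrit hδ v
    intro y hy
    obtain ⟨d, hd, hadj⟩ := hDdom y hy
    exact ⟨d, (memS d).mpr ⟨(hDprop d hd).1, (hDprop d hd).2⟩, hadj⟩
  -- notation
  set u₁ : V := w 0
  set u₂ : V := w 1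
  set u₃ : V := w 2
  have hne12 : u₁ ≠ u₂ := fun h => absurd (hwinj h) (by decide)
  have hne23 : u₂ ≠ u₃ := fun h => absurd (hwinj h) (by decide)
  have hne13 : u₁ ≠ u₃ := fun h => absurd (hwinj h) (by decide)
  have hu1S : u₁ ∈ S := hwS 0
  have hu2S : u₂ ∈ S := hwS 1
  have hu3S : u₃ ∈ S := hwS 2
  have hcloC : ∀ x ∈ S, ∀ y, (y = u₁ ∨ y = u₂ ∨ y = u₃) → G.Adj x y →
      x = u₁ ∨ x = u₂ ∨ x = u₃ := by
    intro x hx y hy hadj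
    rcases hy with h | h | h <;> subst h
    · exact hclo x hx 0 hadj
    · exact hclo x hx 1 hadj
    · exact hclo x hx 2 hadj
  -- P4 : S = {u₁, u₂, u₃}
  have hSsub : ∀ x ∈ S, x = u₁ ∨ x = u₂ ∨ x = u₃ := by
    by_contra hcon
    push_neg at hcon
    obtain ⟨s₀, hs₀S, hs₀1, hs₀2, hs₀3⟩ := hcon
    set K : Finset V := Sf \ {u₁, u₂, u₃} with hKdef
    have hKmem : ∀ x : V, x ∈ K ↔ x ∈ S ∧ x ≠ u₁ ∧ x ≠ u₂ ∧ x ≠ u₃ := by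
      intro x
      simp only [hKdef, Finset.mem_sdiff, hmemSf, Finset.mem_insert, Finset.mem_singleton]
      tauto
    have hs₀K : s₀ ∈ K := (hKmem s₀).mpr ⟨hs₀S, hs₀1, hs₀2, hs₀3⟩
    have hKnbr : ∀ k ∈ K, ∃ m ∈ K, G.Adj k m := by
      intro k hk
      obtain ⟨hkS, hk1, hk2, hk3⟩ := (hKmem k).mp hk
      obtain ⟨d, hdS, hadj⟩ := hdom k (hSne k hkS)
      obtain ⟨hkS', hk1', hk2', hk3'⟩ := (hKmem k).mp hk
      have hdC : ¬(d = u₁ ∨ d = u₂ ∨ d = u₃) := by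
        intro hd
        rcases hcloC k hkS' d hd hadj with h | h | h <;> tauto
      exact ⟨d, (hKmem d).mpr ⟨hdS, fun h => hdC (Or.inl h), fun h => hdC (Or.inr (Or.inl h)),
        fun h => hdC (Or.inr (Or.inr h))⟩, hadj⟩
    have hCsub : ({u₁, u₂, u₃} : Finset V) ⊆ Sf := by
      intro x hx
      simp only [Finset.mem_insert, Finset.mem_singleton] at hx
      rcases hx with rfl | rfl | rfl <;> rw [hmemSf] <;> assumption
    have hCcard : ({u₁, u₂, u₃} : Finset V).card = 3 := by
      rw [Finset.card_insert_of_notMem (by simp [hne12, hne13]),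
        Finset.card_insert_of_notMem (by simp [hne23]), Finset.card_singleton]
    have hKcard : K.card + 3 = Sf.card := by
      have h1 := Finset.card_sdiff_add_card_eq_card hCsub
      rw [hCcard] at h1
      exact h1
    have hAex : ∃ a, G.Adj v a := by
      have h2 : 0 < (G.neighborFinset v).card := by
        rw [G.card_neighborFinset_eq_degree]; have := hdeg2 v; omega
      obtain ⟨a, ha⟩ := Finset.card_pos.mp h2
      exact ⟨a, (mem_neighborFinset G v a).mp ha⟩
    obtain ⟨a0, ha0⟩ := hAex
    by_cases hL : ∃ ℓ ∈ K, ∀ k ∈ K, ∃ m, m ∈ K ∧ m ≠ ℓ ∧ G.Adj k m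
    · -- case: good deletion vertex exists
      obtain ⟨ℓ, hℓK, hℓ⟩ := hL
      set W : Finset V := insert v (insert a0 (insert u₁ (insert u₂ (K.erase ℓ)))) with hWdef
      have hWcard : W.card < G.totalDomNum := by
        rw [hγt, hWdef]
        have h1 : (K.erase ℓ).card = K.card - 1 := Finset.card_erase_of_mem hℓK
        have h2 : 0 < K.card := Finset.card_pos.mpr ⟨ℓ, hℓK⟩
        have c4 := Finset.card_insert_le u₂ (K.erase ℓ)
        have c3 := Finset.card_insert_le u₁ (insert u₂ (K.erase ℓ))
        have c2 := Finset.card_insert_le a0 (insert u₁ (insert u₂ (K.erase ℓ)))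
        have c1 := Finset.card_insert_le v (insert a0 (insert u₁ (insert u₂ (K.erase ℓ))))
        omega
      apply G.not_TDS' hWcard
      intro y
      have hmemW : ∀ x : V, x = v ∨ x = a0 ∨ x = u₁ ∨ x = u₂ ∨ (x ∈ K ∧ x ≠ ℓ) → x ∈ W := by
        intro x hx
        rw [hWdef]
        simp only [Finset.mem_insert, Finset.mem_erase]
        rcases hx with rfl | rfl | rfl | rfl | ⟨hK, hne⟩
        · exact Or.inl rfl
        · exact Or.inr (Or.inl rfl)
        · exact Or.inr (Or.inr (Or.inl rfl))
        · exact Or.inr (Or.inr (Or.inr (Or.inl rfl)))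
        · exact Or.inr (Or.inr (Or.inr (Or.inr ⟨hne, hK⟩)))
      rcases hcases y with rfl | hvy | hyS
      · exact ⟨a0, Finset.mem_coe.mpr (hmemW a0 (Or.inr (Or.inl rfl))), ha0⟩
      · exact ⟨v, Finset.mem_coe.mpr (hmemW v (Or.inl rfl)), hvy.symm⟩
      · by_cases hy1 : y = u₁
        · exact ⟨u₂, Finset.mem_coe.mpr (hmemW u₂ (Or.inr (Or.inr (Or.inr (Or.inl rfl))))), hy1 ▸ ha01⟩
        by_cases hy2 : y = u₂
        · exact ⟨u₁, Finset.mem_coe.mpr (hmemW u₁ (Or.inr (Or.inr (Or.inl rfl)))), hy2 ▸ ha01.symm⟩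
        by_cases hy3 : y = u₃
        · exact ⟨u₂, Finset.mem_coe.mpr (hmemW u₂ (Or.inr (Or.inr (Or.inr (Or.inl rfl))))), hy3 ▸ ha12.symm⟩
        · have hyK : y ∈ K := (hKmem y).mpr ⟨hyS, hy1, hy2, hy3⟩
          obtain ⟨m, hmK, hmℓ, hadj⟩ := hℓ y hyK
          exact ⟨m, Finset.mem_coe.mpr (hmemW m (Or.inr (Or.inr (Or.inr (Or.inr ⟨hmK, hmℓ⟩))))), hadj⟩
    · -- case: every vertex of K is a unique neighbor; perfect "pairing"
      have hL' : ∀ ℓ ∈ K, ∃ k ∈ K, ∀ m ∈ K, G.Adj k m → m = ℓ := by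
        intro ℓ hℓ
        by_contra hcon
        apply hL
        refine ⟨ℓ, hℓ, fun k hk => ?_⟩
        by_contra hno
        apply hcon
        refine ⟨k, hk, fun m hm hadj => ?_⟩
        by_contra hne
        exact hno ⟨m, hm, hne, hadj⟩
      choose f hfK hfuniq using hL'
      have hfinj : ∀ ℓ₁ ℓ₂ (h₁ : ℓ₁ ∈ K) (h₂ : ℓ₂ ∈ K), f ℓ₁ h₁ = f ℓ₂ h₂ → ℓ₁ = ℓ₂ := by
        intro ℓ₁ ℓ₂ h₁ h₂ heq
        obtain ⟨m, hmK, hadj⟩ := hKnbr (f ℓ₁ h₁) (hfK ℓ₁ h₁)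
        have e1 := hfuniq ℓ₁ h₁ m hmK hadj
        have e2 := hfuniq ℓ₂ h₂ m hmK (heq ▸ hadj)
        rw [← e1, ← e2]
      have hsurj := Finset.surj_on_of_inj_on_of_card_le f hfK hfinj le_rfl
      have huniqNbr : ∀ x ∈ K, ∃ ℓ ∈ K, G.Adj x ℓ ∧ ∀ m ∈ K, G.Adj x m → m = ℓ := by
        intro x hx
        obtain ⟨ℓ, hℓK, hxf⟩ := hsurj x hx
        obtain ⟨m, hmK, hadj⟩ := hKnbr x hx
        have huni : ∀ m' ∈ K, G.Adj x m' → m' = ℓ := by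
          intro m' hm' hadj'
          exact hfuniq ℓ hℓK m' hm' (hxf ▸ hadj')
        have := huni m hmK hadj
        exact ⟨ℓ, hℓK, this ▸ hadj, huni⟩
      obtain ⟨y0, hy0K, hxy0, hxuniq⟩ := huniqNbr s₀ hs₀K
      obtain ⟨z, hzK, hyz, hyuniq0⟩ := huniqNbr y0 hy0K
      have hzx : s₀ = z := hyuniq0 s₀ hs₀K hxy0.symm
      have hyuniq : ∀ m ∈ K, G.Adj y0 m → m = s₀ := by
        intro m hm hadj
        rw [hyuniq0 m hm hadj, ← hzx]
      -- a second neighbor of s₀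
      have h2 : 1 < (G.neighborFinset s₀).card := by
        rw [G.card_neighborFinset_eq_degree]; exact hdeg2 s₀
      obtain ⟨a, haN, hay0⟩ := Finset.exists_mem_ne h2 y0
      rw [mem_neighborFinset] at haN
      have hava : G.Adj v a := by
        by_contra hva
        have hav : a ≠ v := fun h => hSnv' s₀ hs₀S (h ▸ haN)
        have haS : a ∈ S := (memS a).mpr ⟨hav, hva⟩
        have haK : a ∈ K := by
          obtain ⟨hs₀S', h1, h2', h3⟩ := (hKmem s₀).mp hs₀K
          have haC : ¬(a = u₁ ∨ a = u₂ ∨ a = u₃) := by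
            intro hd
            rcases hcloC s₀ hs₀S' a hd haN with h | h | h <;> tauto
          exact (hKmem a).mpr ⟨haS, fun h => haC (Or.inl h), fun h => haC (Or.inr (Or.inl h)),
            fun h => haC (Or.inr (Or.inr h))⟩
        exact hay0 (hxuniq a haK haN)
      set W : Finset V := insert v (insert a ((Sf.erase y0).erase u₃)) with hWdef
      have hy0Sf : y0 ∈ Sf := (hmemSf y0).mpr ((hKmem y0).mp hy0K).1
      have hu3Sf : u₃ ∈ Sf := (hmemSf u₃).mpr hu3S
      have hy0u3 : u₃ ≠ y0 := fun h => ((hKmem y0).mp hy0K).2.2.2 h.symm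
      have hWcard : W.card < G.totalDomNum := by
        rw [hγt, hWdef]
        have h1 : (Sf.erase y0).card = Sf.card - 1 := Finset.card_erase_of_mem hy0Sf
        have hu3' : u₃ ∈ Sf.erase y0 := Finset.mem_erase.mpr ⟨hy0u3, hu3Sf⟩
        have h2' : ((Sf.erase y0).erase u₃).card = (Sf.erase y0).card - 1 :=
          Finset.card_erase_of_mem hu3'
        have h0 : 0 < (Sf.erase y0).card := Finset.card_pos.mpr ⟨u₃, hu3'⟩
        have c2 := Finset.card_insert_le a ((Sf.erase y0).erase u₃)
        have c1 := Finset.card_insert_le v (insert a ((Sf.erase y0).erase u₃))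
        omega
      apply G.not_TDS' hWcard
      intro t
      have hmemW : ∀ x : V, x = v ∨ x = a ∨ (x ∈ S ∧ x ≠ u₃ ∧ x ≠ y0) → x ∈ W := by
        intro x hx
        rw [hWdef]
        simp only [Finset.mem_insert, Finset.mem_erase, hmemSf]
        rcases hx with rfl | rfl | ⟨hxS, hx3, hxy⟩
        · exact Or.inl rfl
        · exact Or.inr (Or.inl rfl)
        · exact Or.inr (Or.inr ⟨hx3, hxy, hxS⟩)
      have hu2W : u₂ ∈ ↑W := Finset.mem_coe.mpr <| hmemW u₂ (Or.inr (Or.inr ⟨hu2S, hne23,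
        fun h => ((hKmem y0).mp hy0K).2.2.1 h.symm⟩))
      have hu1W : u₁ ∈ ↑W := Finset.mem_coe.mpr <| hmemW u₁ (Or.inr (Or.inr ⟨hu1S, hne13,
        fun h => ((hKmem y0).mp hy0K).2.1 h.symm⟩))
      rcases hcases t with rfl | hvt | htS
      · exact ⟨a, Finset.mem_coe.mpr (hmemW a (Or.inr (Or.inl rfl))), hava⟩
      · exact ⟨v, Finset.mem_coe.mpr (hmemW v (Or.inl rfl)), hvt.symm⟩
      · by_cases ht1 : t = u₁
        · exact ⟨u₂, hu2W, ht1 ▸ ha01⟩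
        by_cases ht2 : t = u₂
        · exact ⟨u₁, hu1W, ht2 ▸ ha01.symm⟩
        by_cases ht3 : t = u₃
        · exact ⟨u₂, hu2W, ht3 ▸ ha12.symm⟩
        · have htK : t ∈ K := (hKmem t).mpr ⟨htS, ht1, ht2, ht3⟩
          by_cases hts : t = s₀
          · exact ⟨a, Finset.mem_coe.mpr (hmemW a (Or.inr (Or.inl rfl))), hts ▸ haN⟩
          by_cases hty : t = y0
          · refine ⟨s₀, Finset.mem_coe.mpr (hmemW s₀ (Or.inr (Or.inr ⟨hs₀S, hs₀3, ?_⟩))), hty ▸ hxy0.symm⟩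
            rintro rfl
            exact (G.irrefl) (hty ▸ hxy0)
          · obtain ⟨ℓ', hℓ'K, hadj', huniq'⟩ := huniqNbr t htK
            have hℓ'S := ((hKmem ℓ').mp hℓ'K).1
            have hℓ'3 := ((hKmem ℓ').mp hℓ'K).2.2.2
            have hℓ'y : ℓ' ≠ y0 := by
              rintro rfl
              exact hts (hyuniq t htK hadj'.symm)
            exact ⟨ℓ', Finset.mem_coe.mpr (hmemW ℓ' (Or.inr (Or.inr ⟨hℓ'S, hℓ'3, hℓ'y⟩))), hadj'⟩
  -- now S = C
  have hSeq : S = {u₁, u₂, u₃} := by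
    ext x
    simp only [Set.mem_insert_iff, Set.mem_singleton_iff]
    constructor
    · exact fun hx => hSsub x hx
    · rintro (rfl | rfl | rfl) <;> assumption
  have hSfcard3 : Sf.card = 3 := by
    have : Sf = {u₁, u₂, u₃} := by
      ext x
      rw [hmemSf, hSeq]
      simp only [Set.mem_insert_iff, Set.mem_singleton_iff, Finset.mem_insert,
        Finset.mem_singleton]
    rw [this, Finset.card_insert_of_notMem (by simp [hne12, hne13]),
      Finset.card_insert_of_notMem (by simp [hne23]), Finset.card_singleton]
  have hγ4 : G.totalDomNum = 4 := by rw [hγt, hSfcard3]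
  -- P2 : no common neighbor of u₂ and v
  have hP2 : ∀ b : V, G.Adj u₂ b → ¬ G.Adj v b := by
    intro b hu2b hvb
    set W : Finset V := insert u₂ (insert v ({b} : Finset V)) with hWdef
    have hWcard : W.card < G.totalDomNum := by
      rw [hγ4, hWdef]
      have c2 := Finset.card_insert_le v ({b} : Finset V)
      have c1 := Finset.card_insert_le u₂ (insert v ({b} : Finset V))
      have := Finset.card_singleton b
      omega
    apply G.not_TDS' hWcard
    intro y
    have hmemW : ∀ x : V, x = u₂ ∨ x = v ∨ x = b → x ∈ W := by
      intro x hx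
      rw [hWdef]
      simp only [Finset.mem_insert, Finset.mem_singleton]
      exact hx
    rcases hcases y with rfl | hvy | hyS
    · exact ⟨b, Finset.mem_coe.mpr (hmemW b (Or.inr (Or.inr rfl))), hvb⟩
    · exact ⟨v, Finset.mem_coe.mpr (hmemW v (Or.inr (Or.inl rfl))), hvy.symm⟩
    · rcases hSsub y hyS with rfl | rfl | rfl
      · exact ⟨u₂, Finset.mem_coe.mpr (hmemW u₂ (Or.inl rfl)), ha01⟩
      · exact ⟨b, Finset.mem_coe.mpr (hmemW b (Or.inr (Or.inr rfl))), hu2b⟩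
      · exact ⟨u₂, Finset.mem_coe.mpr (hmemW u₂ (Or.inl rfl)), ha12.symm⟩
  -- outer neighbors of u₁, u₃ go to N(v)
  have hout1 : ∀ b : V, G.Adj u₁ b → b = u₂ ∨ G.Adj v b := by
    intro b hb
    by_cases hvb : G.Adj v b
    · exact Or.inr hvb
    have hbv : b ≠ v := fun h => hSnv' u₁ hu1S (h ▸ hb)
    have hbS : b ∈ S := (memS b).mpr ⟨hbv, hvb⟩
    rcases hSsub b hbS with rfl | rfl | rfl
    · exact absurd hb (G.irrefl)
    · exact Or.inl rfl
    · exact absurd hb hn02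
  have hout3 : ∀ b : V, G.Adj u₃ b → b = u₂ ∨ G.Adj v b := by
    intro b hb
    by_cases hvb : G.Adj v b
    · exact Or.inr hvb
    have hbv : b ≠ v := fun h => hSnv' u₃ hu3S (h ▸ hb)
    have hbS : b ∈ S := (memS b).mpr ⟨hbv, hvb⟩
    rcases hSsub b hbS with rfl | rfl | rfl
    · exact absurd hb.symm hn02
    · exact Or.inl rfl
    · exact absurd hb (G.irrefl)
  have hvu2 : ¬ G.Adj v u₂ := hSnv u₂ hu2S
  -- P3 : second neighbors
  have hP3' : ∀ (i : Fin 3) (uA uB uC : V), uA = w i → G.Adj uA u₂ →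
      (∀ b : V, G.Adj uA b → b = u₂ ∨ G.Adj v b) →
      ∃ a, G.Adj uA a ∧ G.Adj v a ∧ a ≠ u₂ := by
    intro i uA uB uC hA hAu2 hAout
    have h2 : 1 < (G.neighborFinset uA).card := by
      rw [G.card_neighborFinset_eq_degree]; exact hdeg2 uA
    obtain ⟨a, haN, hau2⟩ := Finset.exists_mem_ne h2 u₂
    rw [mem_neighborFinset] at haN
    rcases hAout a haN with h | h
    · exact absurd h hau2
    · exact ⟨a, haN, h, hau2⟩
  obtain ⟨a1, ha1N, ha1v, ha1u2⟩ := hP3' 0 u₁ u₂ u₃ rfl ha01 hout1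
  obtain ⟨a3, ha3N, ha3v, ha3u2⟩ := hP3' 2 u₃ u₂ u₁ rfl ha12.symm hout3
  -- disjointness trick
  have hdisj : ∀ b : V, G.Adj u₁ b → G.Adj u₃ b → b = u₂ := by
    intro b hb1 hb3
    by_contra hbu2
    have hvb : G.Adj v b := by
      rcases hout1 b hb1 with h | h
      · exact absurd h hbu2
      · exact h
    set W : Finset V := insert v (insert b ({u₁} : Finset V)) with hWdef
    have hWcard : W.card < G.totalDomNum := by
      rw [hγ4, hWdef]
      have c2 := Finset.card_insert_le b ({u₁} : Finset V)
      have c1 := Finset.card_insert_le v (insert b ({u₁} : Finset V))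
      have := Finset.card_singleton u₁
      omega
    apply G.not_TDS' hWcard
    intro y
    have hmemW : ∀ x : V, x = v ∨ x = b ∨ x = u₁ → x ∈ W := by
      intro x hx
      rw [hWdef]
      simp only [Finset.mem_insert, Finset.mem_singleton]
      exact hx
    rcases hcases y with rfl | hvy | hyS
    · exact ⟨b, Finset.mem_coe.mpr (hmemW b (Or.inr (Or.inl rfl))), hvb⟩
    · exact ⟨v, Finset.mem_coe.mpr (hmemW v (Or.inl rfl)), hvy.symm⟩
    · rcases hSsub y hyS with rfl | rfl | rfl
      · exact ⟨b, Finset.mem_coe.mpr (hmemW b (Or.inr (Or.inl rfl))), hb1⟩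
      · exact ⟨u₁, Finset.mem_coe.mpr (hmemW u₁ (Or.inr (Or.inr rfl))), ha01.symm⟩
      · exact ⟨b, Finset.mem_coe.mpr (hmemW b (Or.inr (Or.inl rfl))), hb3⟩
  -- assemble
  refine ⟨u₁, u₂, u₃, hne12, hne23, hne13, hSeq, ha01, ha12, hn02, ?_, ?_, ?_, ?_, ?_⟩
  · ext b
    simp only [Set.mem_inter_iff, mem_neighborSet, Set.mem_empty_iff_false, iff_false]
    rintro ⟨h1, h2⟩
    exact hP2 b h1 h2
  · exact ⟨a1, ha1N, ha1u2⟩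
  · exact ⟨a3, ha3N, ha3u2⟩
  · rw [Set.disjoint_left]
    rintro b ⟨hb1, hb2⟩ ⟨hb3, _⟩
    rw [mem_neighborSet] at hb1 hb3
    exact hb2 (hdisj b hb1 hb3)
  · ext b
    simp only [Set.mem_union, Set.mem_diff, mem_neighborSet, Set.mem_singleton_iff]
    constructor
    · intro hvb
      have hbv : b ≠ v := fun h => G.irrefl (h ▸ hvb)
      obtain ⟨d, hdS, hadj⟩ := hdom b hbv
      have hbu2 : b ≠ u₂ := fun h => hvu2 (h ▸ hvb)
      rcases hSsub d hdS with rfl | rfl | rfl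
      · exact Or.inl ⟨hadj.symm, hbu2⟩
      · exact absurd hvb (hP2 b hadj.symm)
      · exact Or.inr ⟨hadj.symm, hbu2⟩
    · rintro (⟨h1, h2⟩ | ⟨h1, h2⟩)
      · rcases hout1 b h1 with h | h
        · exact absurd h h2
        · exact h
      · rcases hout3 b h1 with h | h
        · exact absurd h h2
        · exact h

end SimpleGraph
end

section
/- Let G be a γ_t-critical graph of order n with γ_t(G) = n − Δ(G) and δ(G) ≥ 2, let v be a vertex of maximum degree Δ(G), and let S = V(G) − N[v]. If every connected component of G[S] is a path P_2, say the components are the edges u_1w_1, …, u_tw_t, then for every u ∈ S we have N(u) ∩ N(v) ≠ ∅, and N(v) is the disjoint union of the sets N(u_1) − {w_1}, N(w_1) − {u_1}, …, N(u_t) − {w_t}, N(w_t) − {u_t}. -/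
open scoped Classical

namespace SimpleGraph

variable {V : Type*}

/-!
Let `S = V - N[v]`, and write `ā` for the partner of `a ∈ S`. Then `n = 1 + Δ + |S|`, so
`γₜ(G) = |S| + 1`, and a vertex `a ∈ S` is adjacent only to `ā` and to vertices of `N(v)`; as
`δ ≥ 2`, it has a neighbour in `N(v)`. If some `x` lay in both `N(a) - {ā}` and `N(b) - {b̄}`
with `a ≠ b`, then `x ∈ N(v)`, and `{v, x} ∪ (S - {ā, b̄})` would totally dominate `G` with only
`|S|` vertices. Finally `v` is not a support vertex, so `γₜ(G - v) ≤ |S|`; a minimum total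
dominating set of `G - v` then lies in `S` (otherwise it also dominates `v`), and a vertex
`x ∈ N(v)` dominated by `a ∈ S` lies in `N(a) - {ā}`, since `ā ∉ N(v)`.
-/

section TotalDomination

variable [Fintype V] {G : SimpleGraph V}

theorem totalDomNum_le_card_s10 {D : Finset V} (hD : G.IsTotalDomSet ↑D) :
    G.totalDomNum ≤ D.card :=
  Nat.sInf_le ⟨D, hD, rfl⟩

theorem exists_isTotalDomSet_card_eq_totalDomNum (hG : ∀ a, ∃ b, G.Adj a b) :
    ∃ D : Finset V, G.IsTotalDomSet ↑D ∧ D.card = G.totalDomNum := by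
  refine Nat.sInf_mem (s := {n | ∃ D : Finset V, G.IsTotalDomSet ↑D ∧ D.card = n})
    ⟨_, Finset.univ, fun a => ?_, rfl⟩
  obtain ⟨b, hb⟩ := hG a
  exact ⟨b, Finset.mem_coe.2 (Finset.mem_univ b), hb⟩

theorem exists_adj_ne_of_two_le_minDegree (hδ : 2 ≤ G.minDegree) (a c : V) :
    ∃ b, G.Adj a b ∧ b ≠ c := by
  have : 1 < (G.neighborFinset a).card := by
    rw [card_neighborFinset_eq_degree]
    exact hδ.trans (G.minDegree_le_degree a)
  obtain ⟨b, hb, hbc⟩ := Finset.exists_mem_ne this c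
  exact ⟨b, (G.mem_neighborFinset a b).1 hb, hbc⟩

theorem not_isSupportVertex_of_two_le_minDegree (hδ : 2 ≤ G.minDegree) (v : V) :
    ¬ G.IsSupportVertex v := by
  rintro ⟨a, -, ha⟩
  have := G.minDegree_le_degree a
  omega

theorem deleteVert_exists_adj_of_two_le_minDegree (hδ : 2 ≤ G.minDegree) (v : V)
    (a : {u // u ≠ v}) : ∃ b, (G.deleteVert v).Adj a b :=
  let ⟨b, hab, hbv⟩ := exists_adj_ne_of_two_le_minDegree hδ a v
  ⟨⟨b, hbv⟩, hab⟩

theorem totalDomNum_le_card_of_deleteVert {v : V} {D : Finset {u // u ≠ v}}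
    (hD : (G.deleteVert v).IsTotalDomSet ↑D) (hDv : ∃ y ∈ D, G.Adj v y) :
    G.totalDomNum ≤ D.card := by
  refine (totalDomNum_le_card_s10 (D := D.map (Function.Embedding.subtype _)) ?_).trans_eq
    (Finset.card_map _)
  intro z
  by_cases hz : z = v
  · obtain ⟨y, hy, hvy⟩ := hDv
    exact ⟨y, Finset.mem_map_of_mem _ hy, hz ▸ hvy⟩
  · obtain ⟨b, hb, hzb⟩ := hD ⟨z, hz⟩
    exact ⟨b, Finset.mem_map_of_mem _ hb, hzb⟩

end TotalDomination

/-- Every component of `G[V - N[v]]` is a `P₂`: its vertices are the `e i`, and the partner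
of `e i` is `e (σ i)`. -/
structure ComponentsAreP2 (G : SimpleGraph V) (v : V) {ι : Type*} (e : ι → V) (σ : ι → ι) :
    Prop where
  injective : Function.Injective e
  range_eq : Set.range e = ({v} ∪ G.neighborSet v)ᶜ
  adj : ∀ i, G.Adj (e i) (e (σ i))
  eq_of_adj : ∀ i j, G.Adj (e i) (e j) → j = σ i

namespace ComponentsAreP2

variable {ι : Type*} {G : SimpleGraph V} {v : V} {e : ι → V} {σ : ι → ι}
  (h : ComponentsAreP2 G v e σ)
include h

theorem involutive : Function.Involutive σ :=
  fun i => (h.eq_of_adj _ _ (h.adj i).symm).symm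

theorem ne_center (i : ι) : e i ≠ v := by
  have := h.range_eq ▸ Set.mem_range_self (f := e) i
  simp_all

theorem not_adj_center (i : ι) : ¬ G.Adj v (e i) := by
  have := h.range_eq ▸ Set.mem_range_self (f := e) i
  simp_all

theorem eq_or_adj_or_exists (z : V) : z = v ∨ G.Adj v z ∨ ∃ i, e i = z := by
  by_contra! hz
  obtain ⟨i, rfl⟩ : z ∈ Set.range e := h.range_eq ▸ Set.mem_compl (by simp [hz.1, hz.2.1])
  exact hz.2.2 i rfl

theorem eq_or_adj_center_of_adj {i : ι} {y : V} (hy : G.Adj (e i) y) :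
    y = e (σ i) ∨ G.Adj v y := by
  rcases h.eq_or_adj_or_exists y with rfl | hvy | ⟨j, rfl⟩
  · exact absurd hy.symm (h.not_adj_center i)
  · exact Or.inr hvy
  · exact Or.inl (congrArg e (h.eq_of_adj i j hy))

theorem card_eq [Fintype V] [Fintype ι] :
    Fintype.card V = 1 + G.degree v + Fintype.card ι := by
  have hdisj : Disjoint (G.neighborFinset v) (Finset.univ.map ⟨e, h.injective⟩) := by
    simpa [Finset.disjoint_left] using fun z hvy i (hi : e i = z) => h.not_adj_center i (hi ▸ hvy)
  have hv : v ∉ (G.neighborFinset v).disjUnion _ hdisj := by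
    simp [h.ne_center]
  have huniv : Finset.univ = insert v ((G.neighborFinset v).disjUnion _ hdisj) := by
    ext z
    rcases h.eq_or_adj_or_exists z with rfl | hz | ⟨i, rfl⟩ <;> simp [*]
  rw [← Finset.card_univ, huniv, Finset.card_insert_of_notMem hv, Finset.card_disjUnion,
    Finset.card_map, card_neighborFinset_eq_degree, Finset.card_univ]
  ring

theorem neighborSet_inter_neighborSet_center_nonempty [Fintype V] (hδ : 2 ≤ G.minDegree)
    (i : ι) : (G.neighborSet (e i) ∩ G.neighborSet v).Nonempty := by
  obtain ⟨y, hy, hne⟩ := exists_adj_ne_of_two_le_minDegree hδ (e i) (e (σ i))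
  exact ⟨y, hy, (h.eq_or_adj_center_of_adj hy).resolve_left hne⟩

theorem isTotalDomSet_insert_insert_image_compl [Fintype ι] {p q : ι} {x : V} (hvx : G.Adj v x)
    (hpx : G.Adj (e p) x) (hqx : G.Adj (e q) x) :
    G.IsTotalDomSet ↑(insert v (insert x (({σ p, σ q}ᶜ : Finset ι).image e))) := by
  intro z
  rcases h.eq_or_adj_or_exists z with rfl | hvz | ⟨r, rfl⟩
  · exact ⟨x, by simp, hvx⟩
  · exact ⟨v, by simp, hvz.symm⟩
  · by_cases hr : r = p ∨ r = q
    · exact ⟨x, by simp, by rcases hr with rfl | rfl <;> assumption⟩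
    · refine ⟨e (σ r), ?_, h.adj r⟩
      have hσr : σ r ∉ ({σ p, σ q} : Finset ι) := by
        simpa [h.involutive.injective.eq_iff] using hr
      exact Finset.mem_coe.2 (Finset.mem_insert_of_mem (Finset.mem_insert_of_mem
        (Finset.mem_image_of_mem e (Finset.mem_compl.2 hσr))))

theorem disjoint_neighborSet_sdiff [Fintype V] [Fintype ι]
    (hγ : G.totalDomNum = Fintype.card ι + 1) {p q : ι} (hpq : p ≠ q) :
    Disjoint (G.neighborSet (e p) \ {e (σ p)}) (G.neighborSet (e q) \ {e (σ q)}) := by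
  rw [Set.disjoint_left]
  rintro x ⟨hpx, hxp⟩ ⟨hqx, -⟩
  have hvx := (h.eq_or_adj_center_of_adj hpx).resolve_left hxp
  have hcard : ({σ p, σ q} : Finset ι).card = 2 :=
    Finset.card_pair (h.involutive.injective.ne hpq)
  have hle := totalDomNum_le_card_s10 (G := G) (h.isTotalDomSet_insert_insert_image_compl hvx hpx hqx)
  have := Finset.card_le_univ ({σ p, σ q} : Finset ι)
  have := Finset.card_insert_le v (insert x (({σ p, σ q}ᶜ : Finset ι).image e))
  have := Finset.card_insert_le x (({σ p, σ q}ᶜ : Finset ι).image e)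
  have := ({σ p, σ q}ᶜ : Finset ι).card_image_le (f := e)
  rw [Finset.card_compl, hcard] at this
  omega

theorem iUnion_neighborSet_sdiff_subset :
    ⋃ i, G.neighborSet (e i) \ {e (σ i)} ⊆ G.neighborSet v := by
  simp only [Set.iUnion_subset_iff]
  rintro i y ⟨hy, hne⟩
  exact (h.eq_or_adj_center_of_adj hy).resolve_left hne

theorem neighborSet_subset_iUnion_of_isTotalDomSet {D : Set {u // u ≠ v}}
    (hD : (G.deleteVert v).IsTotalDomSet D) (hDv : ∀ y ∈ D, ¬ G.Adj v y) :
    G.neighborSet v ⊆ ⋃ i, G.neighborSet (e i) \ {e (σ i)} := by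
  intro x hvx
  obtain ⟨b, hb, hxb⟩ := hD ⟨x, (G.ne_of_adj hvx).symm⟩
  obtain ⟨r, hr⟩ : (b : V) ∈ Set.range e := h.range_eq ▸ by simpa using ⟨b.2, hDv b hb⟩
  refine Set.mem_iUnion.2 ⟨r, (hr ▸ hxb : G.Adj x (e r)).symm, ?_⟩
  rintro rfl
  exact h.not_adj_center _ hvx

theorem neighborSet_center_eq_iUnion [Fintype V] (hδ : 2 ≤ G.minDegree)
    (hlt : (G.deleteVert v).totalDomNum < G.totalDomNum) :
    G.neighborSet v = ⋃ i, G.neighborSet (e i) \ {e (σ i)} := by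
  obtain ⟨D, hD, hcard⟩ :=
    exists_isTotalDomSet_card_eq_totalDomNum (deleteVert_exists_adj_of_two_le_minDegree hδ v)
  refine (h.neighborSet_subset_iUnion_of_isTotalDomSet hD fun y hy hvy => ?_).antisymm
    h.iUnion_neighborSet_sdiff_subset
  have := totalDomNum_le_card_of_deleteVert hD ⟨y, hy, hvy⟩
  omega

end ComponentsAreP2

theorem ComponentsAreP2.of_pairs {G : SimpleGraph V} {v : V} {t : ℕ} {u w : Fin t → V}
    (hinj : Function.Injective (fun p : Fin t × Bool => if p.2 then u p.1 else w p.1))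
    (hrange : Set.range u ∪ Set.range w = ({v} ∪ G.neighborSet v)ᶜ)
    (hedges : ∀ i, G.Adj (u i) (w i))
    (hadj : ∀ x ∈ Set.range u ∪ Set.range w, ∀ y ∈ Set.range u ∪ Set.range w,
      G.Adj x y → ∃ i, (x = u i ∧ y = w i) ∨ (x = w i ∧ y = u i)) :
    ComponentsAreP2 G v (fun p : Fin t × Bool => if p.2 then u p.1 else w p.1)
      (fun p => (p.1, !p.2)) := by
  set e := fun p : Fin t × Bool => if p.2 then u p.1 else w p.1
  have he : Set.range e = Set.range u ∪ Set.range w := by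
    ext x
    simp [e, Prod.exists, Bool.exists_bool, or_comm, exists_or]
  refine ⟨hinj, he ▸ hrange, ?_, fun i j hij => ?_⟩
  · rintro ⟨i, _ | _⟩
    exacts [(hedges i).symm, hedges i]
  · obtain ⟨k, ⟨hi, hj⟩ | ⟨hi, hj⟩⟩ :=
      hadj _ (he ▸ Set.mem_range_self i) _ (he ▸ Set.mem_range_self j) hij
    · obtain rfl := hinj (show e i = e (k, true) from hi)
      exact hinj hj
    · obtain rfl := hinj (show e i = e (k, false) from hi)
      exact hinj hj

/-- for a `γₜ`-critical graph `G` with `γₜ(G) = n - Δ(G)` and `δ(G) ≥ 2`,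
and `v` of maximum degree, if the components of `G[V - N[v]]` are exactly the edges
`u₁w₁, …, u_tw_t` (all `P₂`'s), then every vertex of `S` has a neighbor in `N(v)`,
and `N(v)` is the disjoint union of the sets `N(uᵢ) - {wᵢ}` and `N(wᵢ) - {uᵢ}`. -/
theorem stmt10 {V : Type*} [Fintype V] (G : SimpleGraph V)
    (hcrit : G.IsTotalDomCritical)
    (hγ : G.totalDomNum = Fintype.card V - G.maxDegree)
    (hδ : 2 ≤ G.minDegree)
    (v : V) (hv : G.degree v = G.maxDegree)
    (S : Set V) (hS : S = ({v} ∪ G.neighborSet v)ᶜ)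
    (t : ℕ) (u w : Fin t → V)
    (hinj : Function.Injective (fun p : Fin t × Bool => if p.2 then u p.1 else w p.1))
    (hSeq : S = Set.range u ∪ Set.range w)
    (hedges : ∀ i : Fin t, G.Adj (u i) (w i))
    (hcomp : ∀ x ∈ S, ∀ y ∈ S,
      (G.Adj x y ↔ ∃ i : Fin t, (x = u i ∧ y = w i) ∨ (x = w i ∧ y = u i))) :
    (∀ x ∈ S, (G.neighborSet x ∩ G.neighborSet v).Nonempty) ∧
    Pairwise (Function.onFun Disjoint fun p : Fin t × Bool =>
      if p.2 then G.neighborSet (u p.1) \ {w p.1} else G.neighborSet (w p.1) \ {u p.1}) ∧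
    G.neighborSet v = ⋃ p : Fin t × Bool,
      (if p.2 then G.neighborSet (u p.1) \ {w p.1} else G.neighborSet (w p.1) \ {u p.1}) := by
  set e := fun p : Fin t × Bool => if p.2 then u p.1 else w p.1
  have hP2 : ComponentsAreP2 G v e (fun p => (p.1, !p.2)) :=
    .of_pairs hinj (hSeq.symm.trans hS) hedges fun x hx y hy =>
      (hcomp x (hSeq ▸ hx) y (hSeq ▸ hy)).1
  have hsets : ∀ p : Fin t × Bool,
      (if p.2 then G.neighborSet (u p.1) \ {w p.1} else G.neighborSet (w p.1) \ {u p.1}) =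
        G.neighborSet (e p) \ {e (p.1, !p.2)} := by
    rintro ⟨i, _ | _⟩ <;> rfl
  have hγι : G.totalDomNum = Fintype.card (Fin t × Bool) + 1 := by
    have := hP2.card_eq
    omega
  simp only [hsets]
  refine ⟨fun x hx => ?_, fun p q hpq => hP2.disjoint_neighborSet_sdiff hγι hpq,
    hP2.neighborSet_center_eq_iUnion hδ (hcrit.2 v (not_isSupportVertex_of_two_le_minDegree hδ v))⟩
  obtain ⟨p, rfl⟩ : x ∈ Set.range e := hP2.range_eq ▸ hS ▸ hx
  exact hP2.neighborSet_inter_neighborSet_center_nonempty hδ p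

end SimpleGraph
end
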